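/- arXiv:2406.19975 — 4 statements merged into one kernel-verified Lean document; each statement's English description precedes it below -/
import Mathlib

section
/- Fix n ≥ 1 and a challenge c = (c_1,…,c_n) ∈ {0,1}^n. For arbitrary real numbers t_i, u_i, r_i, s_i (1 ≤ i ≤ n), define the accumulated delay difference recursively by Δ_0 = 0 and Δ_i = Δ_{i−1} + t_i − u_i if c_i = 0, and Δ_i = −Δ_{i−1} + s_i − r_i if c_i = 1. Define φ_i = (−1)^{c_i + c_{i+1} + … + c_n} for 1 ≤ i ≤ n and φ_{n+1} = 1, and define w_1 = (t_1 − u_1) − (s_1 − r_1), w_i = (t_{i−1} − u_{i−1}) + (s_{i−1} − r_{i−1}) + (t_i − u_i) − (s_i − r_i) for 2 ≤ i ≤ n, and w_{n+1} = (t_n − u_n) + (s_n − r_n). Then Δ_n = (1/2) · Σ_{i=1}^{n+1} φ_i w_i; in particular sign(Δ_n) = sign(Σ_{i=1}^{n+1} φ_i w_i). -/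
/-!
Unrolling the recursion, each stage contributes its delay difference `D_i` (`t_i − u_i` or
`s_i − r_i`, according to `c_i`) with the sign `σ_i = (−1)^{c_{i+1} + ⋯ + c_n}` of the later
crossings, so `Δ_n = Σ σ_i D_i`. Writing `F_i = (t_i − u_i) − (s_i − r_i)` and
`G_i = (t_i − u_i) + (s_i − r_i)`, we have `w_i = G_{i−1} + F_i`, so `Σ φ_i w_i` regroups as
`Σ (φ_i F_i + φ_{i+1} G_i)`; since `φ_i = (−1)^{c_i} σ_i` and `φ_{i+1} = σ_i`, the `i`-th
summand is `σ_i ((−1)^{c_i} F_i + G_i) = 2 σ_i D_i`.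
-/

open Finset

theorem eq_sum_prod_mul_of_linear_recurrence {R : Type*} [CommSemiring R] {x a b : ℕ → R}
    (h0 : x 0 = 0) (n : ℕ) (hrec : ∀ i, 1 ≤ i → i ≤ n → x i = a i * x (i - 1) + b i) :
    x n = ∑ i ∈ Icc 1 n, (∏ k ∈ Ioc i n, a k) * b i := by
  induction n with
  | zero => simp [h0]
  | succ n ih =>
    have hprod : ∀ i ∈ Icc 1 n, ∏ k ∈ Ioc i (n + 1), a k = a (n + 1) * ∏ k ∈ Ioc i n, a k :=
      fun i hi ↦ by rw [prod_Ioc_succ_top (mem_Icc.1 hi).2, mul_comm]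
    rw [hrec (n + 1) (by omega) le_rfl, Nat.add_sub_cancel,
      ih fun i h1 h2 ↦ hrec i h1 (h2.trans n.le_succ), sum_Icc_succ_top (by omega), Ioc_self,
      prod_empty, one_mul, mul_sum]
    exact congrArg (· + b (n + 1)) (sum_congr rfl fun i hi ↦ by rw [hprod i hi, mul_assoc])

theorem sum_Icc_mul_eq_of_eq_add_shift {R : Type*} [Semiring R] {n : ℕ} (hn : 1 ≤ n)
    {φ w F G : ℕ → R} (hw1 : w 1 = F 1) (hwmid : ∀ i, 2 ≤ i → i ≤ n → w i = G (i - 1) + F i)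
    (hwlast : w (n + 1) = G n) :
    ∑ i ∈ Icc 1 (n + 1), φ i * w i = ∑ i ∈ Icc 1 n, (φ i * F i + φ (i + 1) * G i) := by
  obtain ⟨m, rfl⟩ := Nat.exists_eq_add_of_le' hn
  have hIcc : ∀ N (f : ℕ → R), ∑ i ∈ Icc 1 N, f i = ∑ i ∈ range N, f (i + 1) := fun N f ↦ by
    rw [range_eq_Ico, sum_Ico_add', zero_add, Ico_add_one_right_eq_Icc]
  have hmid : ∀ i ∈ range m,
      φ (i + 2) * w (i + 2) = φ (i + 2) * F (i + 2) + φ (i + 2) * G (i + 1) := fun i hi ↦ by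
    rw [hwmid (i + 2) (by omega) (by rw [mem_range] at hi; omega), Nat.add_succ_sub_one, mul_add,
      add_comm]
  rw [hIcc, hIcc, sum_range_succ, sum_range_succ', sum_congr rfl hmid, sum_add_distrib,
    sum_add_distrib, sum_range_succ' (fun i ↦ φ (i + 1) * F (i + 1)),
    sum_range_succ (fun i ↦ φ (i + 1 + 1) * G (i + 1)), hw1, hwlast]
  abel

theorem neg_one_pow_mul_sub_add_add {R : Type*} [CommRing R] {b : ℕ} (hb : b = 0 ∨ b = 1)
    (x y : R) : (-1) ^ b * (x - y) + (x + y) = 2 * if b = 0 then x else y := by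
  rcases hb with rfl | rfl
  · rw [if_pos rfl]; ring
  · rw [if_neg one_ne_zero]; ring

theorem Real.sign_mul_of_pos {a : ℝ} (ha : 0 < a) (x : ℝ) : Real.sign (a * x) = Real.sign x := by
  rcases lt_trichotomy x 0 with hx | rfl | hx
  · rw [Real.sign_of_neg hx, Real.sign_of_neg (mul_neg_of_pos_of_neg ha hx)]
  · rw [mul_zero]
  · rw [Real.sign_of_pos hx, Real.sign_of_pos (mul_pos ha hx)]

/-- For a fixed challenge `c ∈ {0,1}^n` and arbitrary stage delays
`t_i, u_i, r_i, s_i`, the recursively accumulated delay difference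
(`Δ_0 = 0`, `Δ_i = Δ_{i−1} + t_i − u_i` if `c_i = 0`, `Δ_i = −Δ_{i−1} + s_i − r_i` if `c_i = 1`)
satisfies `Δ_n = (1/2) · Σ_{i=1}^{n+1} φ_i w_i`, where
`φ_i = (−1)^{c_i + ⋯ + c_n}` (`1 ≤ i ≤ n`), `φ_{n+1} = 1`, and `w` is the transformed
weight vector. In particular `sign(Δ_n) = sign(Σ_{i=1}^{n+1} φ_i w_i)`. -/
theorem stmt1 (n : ℕ) (hn : 1 ≤ n) (c : ℕ → ℕ)
    (hc : ∀ i, 1 ≤ i → i ≤ n → c i = 0 ∨ c i = 1)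
    (t u r s : ℕ → ℝ)
    (Δ : ℕ → ℝ) (hΔ0 : Δ 0 = 0)
    (hΔ : ∀ i, 1 ≤ i → i ≤ n →
      Δ i = if c i = 0 then Δ (i-1) + t i - u i else -Δ (i-1) + s i - r i)
    (φ : ℕ → ℝ)
    (hφ : ∀ i, 1 ≤ i → i ≤ n → φ i = (-1 : ℝ) ^ (∑ k ∈ Finset.Icc i n, c k))
    (hφlast : φ (n+1) = 1)
    (w : ℕ → ℝ)
    (hw1 : w 1 = (t 1 - u 1) - (s 1 - r 1))
    (hwmid : ∀ i, 2 ≤ i → i ≤ n →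
      w i = (t (i-1) - u (i-1)) + (s (i-1) - r (i-1)) + (t i - u i) - (s i - r i))
    (hwlast : w (n+1) = (t n - u n) + (s n - r n)) :
    Δ n = (1/2) * ∑ i ∈ Finset.Icc 1 (n+1), φ i * w i ∧
    Real.sign (Δ n) = Real.sign (∑ i ∈ Finset.Icc 1 (n+1), φ i * w i) := by
  set σ : ℕ → ℝ := fun i ↦ ∏ k ∈ Ioc i n, (-1) ^ c k
  set D : ℕ → ℝ := fun i ↦ if c i = 0 then t i - u i else s i - r i
  have hΔn : Δ n = ∑ i ∈ Icc 1 n, σ i * D i :=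
    eq_sum_prod_mul_of_linear_recurrence hΔ0 n fun i h1 h2 ↦ by
      rcases hc i h1 h2 with h | h <;>
        simp only [hΔ i h1 h2, D, h, one_ne_zero, ↓reduceIte, pow_zero, pow_one] <;> ring
  have hφσ : ∀ i, 1 ≤ i → i ≤ n → φ i = (-1) ^ c i * σ i := fun i h1 h2 ↦ by
    rw [hφ i h1 h2, ← prod_pow_eq_pow_sum, ← mul_prod_Ioc_eq_prod_Icc h2]
  have hφσ_succ : ∀ i, i ≤ n → φ (i + 1) = σ i := fun i h ↦ by
    rcases h.eq_or_lt with rfl | h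
    · simp [σ, hφlast]
    · rw [hφ (i + 1) (by omega) h, ← prod_pow_eq_pow_sum, Finset.Icc_add_one_left_eq_Ioc]
  have hsum : ∑ i ∈ Icc 1 (n + 1), φ i * w i = 2 * ∑ i ∈ Icc 1 n, σ i * D i := by
    rw [sum_Icc_mul_eq_of_eq_add_shift (F := fun i ↦ (t i - u i) - (s i - r i))
      (G := fun i ↦ (t i - u i) + (s i - r i)) hn hw1
      (fun i h1 h2 ↦ by rw [hwmid i h1 h2]; ring) hwlast, mul_sum]
    refine sum_congr rfl fun i hi ↦ ?_
    obtain ⟨h1, h2⟩ := mem_Icc.1 hi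
    rw [hφσ i h1 h2, hφσ_succ i h2]
    linear_combination σ i * neg_one_pow_mul_sub_add_add (hc i h1 h2) (t i - u i) (s i - r i)
  have hmain : Δ n = 1 / 2 * ∑ i ∈ Icc 1 (n + 1), φ i * w i := by
    rw [hsum, hΔn]; ring
  exact ⟨hmain, by rw [hmain, Real.sign_mul_of_pos one_half_pos]⟩
end

section
/- Let U and V be independent standard Gaussian random variables and let ρ ∈ [−1, 1]. Set X = U and Y = ρU + √(1 − ρ²)·V, so that X and Y are standard Gaussians with correlation coefficient E[XY] = ρ. Then P[X > 0 and Y > 0] = 1/4 + arcsin(ρ)/(2π). -/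
/-!
With `ρ = sin θ` and `√(1 - ρ²) = cos θ`, `θ = arcsin ρ`, the event reads, in polar coordinates
`(U, V) = (r cos φ, r sin φ)`, as `cos φ > 0 ∧ sin (φ + θ) > 0`, i.e. `φ ∈ (-θ, π/2)`.
The joint density `(2π)⁻¹ exp (-r²/2)` of `(U, V)` is rotation invariant, so after the
polar change of variables the radial factor integrates to `1` and the angle is uniform on
`(-π, π)`: the event has probability `(π/2 + θ) / (2π)`.
-/

open MeasureTheory ProbabilityTheory Real Set
open scoped ENNReal

lemma integral_Ioi_mul_exp_neg_sq_div_two : ∫ r in Ioi (0 : ℝ), r * exp (-r ^ 2 / 2) = 1 := by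
  have h := integral_mul_cexp_neg_mul_sq (b := (1 / 2 : ℂ)) (by norm_num)
  have e (r : ℝ) : (r : ℂ) * Complex.exp (-(1 / 2) * r ^ 2) = ((r * exp (-r ^ 2 / 2) : ℝ) : ℂ) := by
    push_cast; ring_nf
  simp_rw [e, integral_complex_ofReal] at h
  norm_num at h
  exact_mod_cast h

lemma gaussianPDFReal_mul_gaussianPDFReal (x y : ℝ) :
    gaussianPDFReal 0 1 x * gaussianPDFReal 0 1 y = (2 * π)⁻¹ * exp (-(x ^ 2 + y ^ 2) / 2) := by
  have h2π : √(2 * π) * √(2 * π) = 2 * π := mul_self_sqrt (by positivity)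
  simp only [gaussianPDFReal, NNReal.coe_one, mul_one, sub_zero]
  rw [mul_mul_mul_comm, ← mul_inv, h2π, ← exp_add]
  ring_nf

lemma gaussianReal_prod_gaussianReal_eq_withDensity :
    (gaussianReal 0 1).prod (gaussianReal 0 1) = (volume : Measure (ℝ × ℝ)).withDensity
      (fun p => ENNReal.ofReal ((2 * π)⁻¹ * exp (-(p.1 ^ 2 + p.2 ^ 2) / 2))) := by
  have hdensity : (fun p : ℝ × ℝ => ENNReal.ofReal ((2 * π)⁻¹ * exp (-(p.1 ^ 2 + p.2 ^ 2) / 2)))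
      = fun p => gaussianPDF 0 1 p.1 * gaussianPDF 0 1 p.2 := by
    ext p
    rw [gaussianPDF, gaussianPDF, ← ENNReal.ofReal_mul (gaussianPDFReal_nonneg _ _ _),
      gaussianPDFReal_mul_gaussianPDFReal]
  rw [hdensity, Measure.volume_eq_prod]
  refine Measure.prod_eq fun s t hs ht => ?_
  rw [withDensity_apply _ (hs.prod ht), ← Measure.prod_restrict,
    lintegral_prod_mul (measurable_gaussianPDF 0 1).aemeasurable
      (measurable_gaussianPDF 0 1).aemeasurable,
    gaussianReal_apply 0 one_ne_zero s, gaussianReal_apply 0 one_ne_zero t]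

lemma gaussianReal_prod_gaussianReal_apply_of_polar {S : Set (ℝ × ℝ)} (hS : MeasurableSet S)
    {a b : ℝ} (ha : -π ≤ a) (hb : b ≤ π)
    (hpolar : ∀ r > 0, ∀ φ ∈ Ioo (-π) π, (r * cos φ, r * sin φ) ∈ S ↔ φ ∈ Ioo a b) :
    (gaussianReal 0 1).prod (gaussianReal 0 1) S = ENNReal.ofReal ((b - a) / (2 * π)) := by
  set g : ℝ × ℝ → ℝ≥0∞ := fun p => ENNReal.ofReal ((2 * π)⁻¹ * exp (-(p.1 ^ 2 + p.2 ^ 2) / 2))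
  have hpolar_integrand : EqOn (fun p => ENNReal.ofReal p.1 • S.indicator g (polarCoord.symm p))
      (fun p => ENNReal.ofReal (p.1 * exp (-p.1 ^ 2 / 2)) *
        (Ioo a b).indicator (fun _ => ENNReal.ofReal (2 * π)⁻¹) p.2) polarCoord.target := by
    rintro ⟨r, φ⟩ ⟨hr, hφ⟩
    dsimp only
    have hnorm : (r * cos φ) ^ 2 + (r * sin φ) ^ 2 = r ^ 2 := by
      rw [mul_pow, mul_pow, ← mul_add, cos_sq_add_sin_sq, mul_one]
    by_cases hmem : φ ∈ Ioo a b
    · rw [polarCoord_symm_apply, indicator_of_mem ((hpolar r hr φ hφ).2 hmem),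
        indicator_of_mem hmem, smul_eq_mul, ← ENNReal.ofReal_mul hr.le,
        ← ENNReal.ofReal_mul (mul_nonneg hr.le (exp_pos _).le), hnorm]
      ring_nf
    · rw [polarCoord_symm_apply, indicator_of_notMem (mt (hpolar r hr φ hφ).1 hmem),
        indicator_of_notMem hmem, smul_zero, mul_zero]
  have hradial : ∫⁻ r in Ioi (0 : ℝ), ENNReal.ofReal (r * exp (-r ^ 2 / 2)) = 1 := by
    rw [← ofReal_integral_eq_lintegral_ofReal, integral_Ioi_mul_exp_neg_sq_div_two,
      ENNReal.ofReal_one]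
    · exact (integrable_mul_exp_neg_mul_sq one_half_pos).integrableOn.congr_fun
        (fun r _ => by ring_nf) measurableSet_Ioi
    · exact ae_restrict_of_forall_mem measurableSet_Ioi fun r hr =>
        mul_nonneg (le_of_lt hr) (exp_pos _).le
  rw [gaussianReal_prod_gaussianReal_eq_withDensity, withDensity_apply _ hS,
    ← lintegral_indicator hS, ← lintegral_comp_polarCoord_symm,
    setLIntegral_congr_fun polarCoord.open_target.measurableSet hpolar_integrand,
    polarCoord_target, Measure.volume_eq_prod, ← Measure.prod_restrict,
    lintegral_prod_mul (f := fun r => ENNReal.ofReal (r * exp (-r ^ 2 / 2)))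
      (g := (Ioo a b).indicator fun _ => ENNReal.ofReal (2 * π)⁻¹) (by fun_prop)
      (aemeasurable_const.indicator measurableSet_Ioo), hradial, one_mul,
    lintegral_indicator measurableSet_Ioo, setLIntegral_const,
    Measure.restrict_apply measurableSet_Ioo, inter_eq_left.2 (Ioo_subset_Ioo ha hb),
    volume_Ioo, ← ENNReal.ofReal_mul (by positivity)]
  ring_nf

lemma cos_pos_and_sin_add_pos_iff {θ φ : ℝ} (hθ : θ ∈ Icc (-(π / 2)) (π / 2))
    (hφ : φ ∈ Ioo (-π) π) : 0 < cos φ ∧ 0 < sin (φ + θ) ↔ φ ∈ Ioo (-θ) (π / 2) := by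
  obtain ⟨hθ₁, hθ₂⟩ := hθ
  obtain ⟨hφ₁, hφ₂⟩ := hφ
  constructor
  · rintro ⟨hcos, hsin⟩
    have hφ_lt : φ < π / 2 := by
      by_contra! h
      exact hcos.not_ge (cos_nonpos_of_pi_div_two_le_of_le h (by linarith))
    have hφ_gt : -(π / 2) < φ := by
      by_contra! h
      rw [← cos_neg] at hcos
      exact hcos.not_ge (cos_nonpos_of_pi_div_two_le_of_le (by linarith) (by linarith))
    refine ⟨?_, hφ_lt⟩
    by_contra! h
    exact hsin.not_ge (sin_nonpos_of_nonpos_of_neg_pi_le (by linarith) (by linarith))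
  · rintro ⟨h₁, h₂⟩
    exact ⟨cos_pos_of_mem_Ioo ⟨by linarith, h₂⟩,
      sin_pos_of_pos_of_lt_pi (by linarith) (by linarith)⟩

lemma measurableSet_wedge (α β : ℝ) :
    MeasurableSet {p : ℝ × ℝ | 0 < p.1 ∧ 0 < α * p.1 + β * p.2} := by
  measurability

lemma gaussianReal_prod_gaussianReal_apply_wedge {θ : ℝ} (hθ : θ ∈ Icc (-(π / 2)) (π / 2)) :
    (gaussianReal 0 1).prod (gaussianReal 0 1) {p | 0 < p.1 ∧ 0 < sin θ * p.1 + cos θ * p.2}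
      = ENNReal.ofReal ((π / 2 + θ) / (2 * π)) := by
  rw [gaussianReal_prod_gaussianReal_apply_of_polar (a := -θ) (b := π / 2)
    (measurableSet_wedge _ _) (by linarith [hθ.2, pi_pos]) (by linarith [pi_pos]), sub_neg_eq_add]
  intro r hr φ hφ
  have hrot : sin θ * (r * cos φ) + cos θ * (r * sin φ) = r * sin (φ + θ) := by
    rw [sin_add]; ring
  simp only [mem_ofPred_eq, hrot, mul_pos_iff_of_pos_left hr]
  exact cos_pos_and_sin_add_pos_iff hθ hφ

theorem stmt3_general
    {Ω : Type*} [MeasureSpace Ω]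
    (U V : Ω → ℝ) (hUm : Measurable U) (hVm : Measurable V)
    (hindep : IndepFun U V ℙ)
    (hU : Measure.map U ℙ = gaussianReal 0 1)
    (hV : Measure.map V ℙ = gaussianReal 0 1)
    (ρ : ℝ) (hρ : -1 ≤ ρ) (hρ' : ρ ≤ 1) :
    (ℙ {ω | 0 < U ω ∧ 0 < ρ * U ω + Real.sqrt (1 - ρ ^ 2) * V ω}).toReal
      = 1 / 4 + Real.arcsin ρ / (2 * Real.pi) := by
  have hθ : arcsin ρ ∈ Icc (-(π / 2)) (π / 2) :=
    ⟨neg_pi_div_two_le_arcsin ρ, arcsin_le_pi_div_two ρ⟩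
  have hlaw :
      Measure.map (fun ω => (U ω, V ω)) ℙ = (gaussianReal 0 1).prod (gaussianReal 0 1) := by
    rw [(indepFun_iff_map_prod_eq_prod_map_map' hUm.aemeasurable hVm.aemeasurable
      (by rw [hU]; infer_instance) (by rw [hV]; infer_instance)).1 hindep, hU, hV]
  have hevent : ℙ {ω | 0 < U ω ∧ 0 < ρ * U ω + √(1 - ρ ^ 2) * V ω}
      = Measure.map (fun ω => (U ω, V ω)) ℙ
          {p | 0 < p.1 ∧ 0 < sin (arcsin ρ) * p.1 + cos (arcsin ρ) * p.2} := by
    rw [Measure.map_apply (hUm.prodMk hVm) (measurableSet_wedge _ _), sin_arcsin hρ hρ',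
      cos_arcsin]
    rfl
  rw [hevent, hlaw, gaussianReal_prod_gaussianReal_apply_wedge hθ,
    ENNReal.toReal_ofReal (div_nonneg (by linarith [hθ.1]) (by positivity))]
  field_simp
  ring

/-- If `U, V` are independent standard Gaussians, `ρ ∈ [−1,1]`,
`X = U` and `Y = ρU + √(1−ρ²)V` (standard Gaussians with correlation `ρ`), then
`P[X > 0 ∧ Y > 0] = 1/4 + arcsin ρ / (2π)`. -/
theorem stmt3
    {Ω : Type*} [MeasureSpace Ω] [IsProbabilityMeasure (ℙ : Measure Ω)]
    (U V : Ω → ℝ) (hUm : Measurable U) (hVm : Measurable V)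
    (hindep : IndepFun U V ℙ)
    (hU : Measure.map U ℙ = gaussianReal 0 1)
    (hV : Measure.map V ℙ = gaussianReal 0 1)
    (ρ : ℝ) (hρ : -1 ≤ ρ) (hρ' : ρ ≤ 1) :
    (ℙ {ω | 0 < U ω ∧ 0 < ρ * U ω + Real.sqrt (1 - ρ ^ 2) * V ω}).toReal
      = 1 / 4 + Real.arcsin ρ / (2 * Real.pi) :=
  stmt3_general U V hUm hVm hindep hU hV ρ hρ hρ'
end

section
/- Let n ≥ 1, σ > 0, and let w = (w_1,…,w_{n+1}) be independent centered Gaussian random variables with Var(w_1) = Var(w_{n+1}) = 4σ² and Var(w_i) = 8σ² for 2 ≤ i ≤ n. For any two challenges Φ_1, Φ_2 ∈ {−1,+1}^{n+1} with φ_{1,n+1} = φ_{2,n+1} = 1, the random variables Φ_1·w and Φ_2·w each have variance 8nσ², and their correlation coefficient E[(Φ_1·w)(Φ_2·w)]/(8nσ²) equals 2·S(Φ_1,Φ_2)/n − 1, where S(Φ_1,Φ_2) = (1/2)·1{φ_{1,1}=φ_{2,1}} + Σ_{i=2}^n 1{φ_{1,i}=φ_{2,i}} + 1/2. -/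
/-!
The weights are pairwise independent, centered and square integrable, so the covariance of two
linear combinations `∑ aᵢ wᵢ` and `∑ bᵢ wᵢ` is the diagonal sum `∑ aᵢ bᵢ Var(wᵢ)`. For `±1`
entries `aᵢ bᵢ = 2·1{aᵢ = bᵢ} - 1`, and with the APUF variances `4σ², 8σ², …, 8σ², 4σ²` this sum
is `8σ² (2 S(Φ₁,Φ₂) - n)`. Taking `Φ₁ = Φ₂`, where `S = n`, gives the variance `8nσ²`.
-/

open MeasureTheory ProbabilityTheory Finset
open scoped NNReal ENNReal

noncomputable def simFactor (n : ℕ) (Φ₁ Φ₂ : ℕ → ℝ) : ℝ :=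
  (1/2) * (if Φ₁ 1 = Φ₂ 1 then 1 else 0)
    + (∑ i ∈ Finset.Icc 2 n, if Φ₁ i = Φ₂ i then (1 : ℝ) else 0) + 1/2

section LinearCombination

variable {Ω ι : Type*} {mΩ : MeasurableSpace Ω} {μ : Measure Ω} {X : ι → Ω → ℝ} {s : Finset ι}

lemma covariance_sum_mul_sum_of_pairwise_indepFun [IsFiniteMeasure μ]
    (hX : ∀ i ∈ s, MemLp (X i) 2 μ) (hindep : ∀ i ∈ s, ∀ j ∈ s, i ≠ j → X i ⟂ᵢ[μ] X j)
    (a b : ι → ℝ) :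
    cov[fun ω ↦ ∑ i ∈ s, a i * X i ω, fun ω ↦ ∑ i ∈ s, b i * X i ω; μ]
      = ∑ i ∈ s, a i * b i * Var[X i; μ] := by
  rw [covariance_fun_sum_fun_sum' (fun i hi ↦ (hX i hi).const_mul (a i))
    (fun i hi ↦ (hX i hi).const_mul (b i))]
  refine sum_congr rfl fun i hi ↦ ?_
  rw [sum_eq_single_of_mem i hi fun j hj hji ↦ ?_]
  · rw [covariance_const_mul_left, covariance_const_mul_right,
      covariance_self (hX i hi).aemeasurable]
    ring
  · rw [covariance_const_mul_left, covariance_const_mul_right,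
      (hindep i hi j hj hji.symm).covariance_eq_zero (hX i hi) (hX j hj), mul_zero, mul_zero]

lemma variance_sum_mul_of_pairwise_indepFun [IsFiniteMeasure μ]
    (hX : ∀ i ∈ s, MemLp (X i) 2 μ) (hindep : ∀ i ∈ s, ∀ j ∈ s, i ≠ j → X i ⟂ᵢ[μ] X j)
    (a : ι → ℝ) :
    Var[fun ω ↦ ∑ i ∈ s, a i * X i ω; μ] = ∑ i ∈ s, a i * a i * Var[X i; μ] := by
  rw [← covariance_self, covariance_sum_mul_sum_of_pairwise_indepFun hX hindep]
  exact Finset.aemeasurable_fun_sum _ fun i hi ↦ (hX i hi).aemeasurable.const_mul (a i)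

lemma integral_sum_mul_sum_of_pairwise_indepFun [IsProbabilityMeasure μ]
    (hX : ∀ i ∈ s, MemLp (X i) 2 μ) (hmean : ∀ i ∈ s, μ[X i] = 0)
    (hindep : ∀ i ∈ s, ∀ j ∈ s, i ≠ j → X i ⟂ᵢ[μ] X j) (a b : ι → ℝ) :
    ∫ ω, (∑ i ∈ s, a i * X i ω) * (∑ i ∈ s, b i * X i ω) ∂μ
      = ∑ i ∈ s, a i * b i * Var[X i; μ] := by
  have hmean_sum (c : ι → ℝ) : μ[fun ω ↦ ∑ i ∈ s, c i * X i ω] = 0 := by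
    rw [integral_finsetSum _ fun i hi ↦ ((hX i hi).integrable one_le_two).const_mul (c i)]
    exact sum_eq_zero fun i hi ↦ by rw [integral_const_mul, hmean i hi, mul_zero]
  have hL2 (c : ι → ℝ) : MemLp (fun ω ↦ ∑ i ∈ s, c i * X i ω) 2 μ :=
    memLp_finsetSum s fun i hi ↦ (hX i hi).const_mul (c i)
  rw [← covariance_sum_mul_sum_of_pairwise_indepFun hX hindep, covariance_eq_sub (hL2 a) (hL2 b),
    hmean_sum, hmean_sum, mul_zero, sub_zero]
  rfl

end LinearCombination

lemma indepFun_of_iIndepFun_fin_succ {Ω β : Type*} {mΩ : MeasurableSpace Ω}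
    {mβ : MeasurableSpace β} {μ : Measure Ω} {n : ℕ} {w : ℕ → Ω → β}
    (h : iIndepFun (fun i : Fin n ↦ w (i + 1)) μ) {i j : ℕ} (hi : i ∈ Icc 1 n)
    (hj : j ∈ Icc 1 n) (hij : i ≠ j) : w i ⟂ᵢ[μ] w j := by
  rw [mem_Icc] at hi hj
  have := h.indepFun (i := ⟨i - 1, by omega⟩) (j := ⟨j - 1, by omega⟩) (by simp; omega)
  simpa [Nat.sub_add_cancel hi.1, Nat.sub_add_cancel hj.1] using this

lemma HasLaw.of_map_eq {Ω α : Type*} {mΩ : MeasurableSpace Ω} {mα : MeasurableSpace α}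
    {P : Measure Ω} {μ : Measure α} [NeZero μ] {X : Ω → α} (h : P.map X = μ) :
    HasLaw X μ P :=
  ⟨AEMeasurable.of_map_ne_zero (h ▸ NeZero.ne μ), h⟩

lemma sum_Icc_one_succ_eq {M : Type*} [AddCommMonoid M] {n : ℕ} (hn : 1 ≤ n) (f : ℕ → M) :
    ∑ i ∈ Icc 1 (n + 1), f i = f 1 + ∑ i ∈ Icc 2 n, f i + f (n + 1) := by
  rw [sum_Icc_succ_top (by omega), ← insert_Icc_add_one_left_eq_Icc hn, sum_insert (by simp)]
  rfl

lemma mul_eq_two_mul_ite_sub_one {x y : ℝ} (hx : x = 1 ∨ x = -1) (hy : y = 1 ∨ y = -1) :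
    x * y = 2 * (if x = y then 1 else 0) - 1 := by
  rcases hx with rfl | rfl <;> rcases hy with rfl | rfl <;> norm_num

def apufWeightVar (n : ℕ) (σ : ℝ≥0) (i : ℕ) : ℝ≥0 :=
  if 2 ≤ i ∧ i ≤ n then 8 * σ ^ 2 else 4 * σ ^ 2

section apufWeightVar

variable {n : ℕ} {σ : ℝ≥0}

lemma apufWeightVar_one : apufWeightVar n σ 1 = 4 * σ ^ 2 :=
  if_neg (by omega)

lemma apufWeightVar_add_one : apufWeightVar n σ (n + 1) = 4 * σ ^ 2 :=
  if_neg (by omega)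

lemma apufWeightVar_of_mem_Icc {i : ℕ} (hi : i ∈ Icc 2 n) : apufWeightVar n σ i = 8 * σ ^ 2 :=
  if_pos (mem_Icc.mp hi)

lemma sum_mul_mul_apufWeightVar (hn : 1 ≤ n) {Φ₁ Φ₂ : ℕ → ℝ}
    (hΦ₁ : ∀ i, 1 ≤ i → i ≤ n + 1 → Φ₁ i = 1 ∨ Φ₁ i = -1) (hΦ₁last : Φ₁ (n + 1) = 1)
    (hΦ₂ : ∀ i, 1 ≤ i → i ≤ n + 1 → Φ₂ i = 1 ∨ Φ₂ i = -1) (hΦ₂last : Φ₂ (n + 1) = 1) :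
    ∑ i ∈ Icc 1 (n + 1), Φ₁ i * Φ₂ i * (apufWeightVar n σ i : ℝ)
      = 8 * (σ : ℝ) ^ 2 * (2 * simFactor n Φ₁ Φ₂ - n) := by
  have hmid : ∑ i ∈ Icc 2 n, Φ₁ i * Φ₂ i * (apufWeightVar n σ i : ℝ)
      = 8 * (σ : ℝ) ^ 2 * ∑ i ∈ Icc 2 n, (2 * (if Φ₁ i = Φ₂ i then 1 else 0) - 1) := by
    rw [mul_sum]
    refine sum_congr rfl fun i hi ↦ ?_
    have hi' := mem_Icc.mp hi
    rw [mul_eq_two_mul_ite_sub_one (hΦ₁ i (by omega) (by omega)) (hΦ₂ i (by omega) (by omega)),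
      apufWeightVar_of_mem_Icc hi]
    push_cast
    ring
  have hcard : ((Icc 2 n).card : ℝ) = n - 1 := by
    rw [Nat.card_Icc, show n + 1 - 2 = n - 1 by omega, Nat.cast_sub hn, Nat.cast_one]
  rw [sum_Icc_one_succ_eq hn, hmid, sum_sub_distrib, ← mul_sum, sum_const, nsmul_one, hcard,
    mul_eq_two_mul_ite_sub_one (hΦ₁ 1 le_rfl (by omega)) (hΦ₂ 1 le_rfl (by omega)),
    hΦ₁last, hΦ₂last, apufWeightVar_one, apufWeightVar_add_one, simFactor]
  push_cast
  ring

lemma hasLaw_gaussianReal_apufWeightVar {Ω : Type*} {mΩ : MeasurableSpace Ω} {P : Measure Ω}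
    {w : ℕ → Ω → ℝ} (hw1 : P.map (w 1) = gaussianReal 0 (4 * σ ^ 2))
    (hwlast : P.map (w (n + 1)) = gaussianReal 0 (4 * σ ^ 2))
    (hwmid : ∀ i, 2 ≤ i → i ≤ n → P.map (w i) = gaussianReal 0 (8 * σ ^ 2))
    {i : ℕ} (hi : i ∈ Icc 1 (n + 1)) : HasLaw (w i) (gaussianReal 0 (apufWeightVar n σ i)) P := by
  refine HasLaw.of_map_eq ?_
  rcases (show i = 1 ∨ i ∈ Icc 2 n ∨ i = n + 1 by simp only [mem_Icc] at hi ⊢; omega)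
    with rfl | hmid | rfl
  · rwa [apufWeightVar_one]
  · rw [apufWeightVar_of_mem_Icc hmid]
    exact hwmid i (mem_Icc.mp hmid).1 (mem_Icc.mp hmid).2
  · rwa [apufWeightVar_add_one]

end apufWeightVar

lemma simFactor_self {n : ℕ} (hn : 1 ≤ n) (Φ : ℕ → ℝ) : simFactor n Φ Φ = n := by
  simp only [simFactor, if_true, sum_const, Nat.card_Icc, nsmul_eq_mul, mul_one]
  rw [show n + 1 - 2 = n - 1 by omega, Nat.cast_sub hn]
  ring

theorem stmt6_general
    {Ω : Type*} [MeasureSpace Ω] [IsProbabilityMeasure (ℙ : Measure Ω)]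
    (n : ℕ) (hn : 1 ≤ n) (σ : ℝ≥0) (hσ : 0 < σ)
    (w : ℕ → Ω → ℝ)
    (hindep : iIndepFun (fun i : Fin (n+1) => w ((i : ℕ) + 1)) ℙ)
    (hw1 : Measure.map (w 1) ℙ = gaussianReal 0 (4 * σ ^ 2))
    (hwlast : Measure.map (w (n+1)) ℙ = gaussianReal 0 (4 * σ ^ 2))
    (hwmid : ∀ i, 2 ≤ i → i ≤ n → Measure.map (w i) ℙ = gaussianReal 0 (8 * σ ^ 2))
    (Φ₁ Φ₂ : ℕ → ℝ)
    (hΦ₁ : ∀ i, 1 ≤ i → i ≤ n + 1 → Φ₁ i = 1 ∨ Φ₁ i = -1) (hΦ₁last : Φ₁ (n+1) = 1)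
    (hΦ₂ : ∀ i, 1 ≤ i → i ≤ n + 1 → Φ₂ i = 1 ∨ Φ₂ i = -1) (hΦ₂last : Φ₂ (n+1) = 1) :
    variance (fun ω => ∑ i ∈ Finset.Icc 1 (n+1), Φ₁ i * w i ω) ℙ = 8 * n * (σ : ℝ) ^ 2 ∧
    variance (fun ω => ∑ i ∈ Finset.Icc 1 (n+1), Φ₂ i * w i ω) ℙ = 8 * n * (σ : ℝ) ^ 2 ∧
    (∫ ω, (∑ i ∈ Finset.Icc 1 (n+1), Φ₁ i * w i ω)
          * (∑ i ∈ Finset.Icc 1 (n+1), Φ₂ i * w i ω) ∂ℙ) / (8 * n * (σ : ℝ) ^ 2)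
      = 2 * simFactor n Φ₁ Φ₂ / n - 1 := by
  have hlaw i (hi : i ∈ Icc 1 (n + 1)) :
      HasLaw (w i) (gaussianReal 0 (apufWeightVar n σ i)) ℙ :=
    hasLaw_gaussianReal_apufWeightVar hw1 hwlast hwmid hi
  have hL2 i (hi : i ∈ Icc 1 (n + 1)) : MemLp (w i) 2 ℙ := (hlaw i hi).hasGaussianLaw.memLp_two
  have hmean i (hi : i ∈ Icc 1 (n + 1)) : ℙ[w i] = 0 := by
    rw [(hlaw i hi).integral_eq, integral_id_gaussianReal]
  have hvar i (hi : i ∈ Icc 1 (n + 1)) : Var[w i; ℙ] = apufWeightVar n σ i := by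
    rw [(hlaw i hi).variance_eq, variance_id_gaussianReal]
  have hpair i (hi : i ∈ Icc 1 (n + 1)) j (hj : j ∈ Icc 1 (n + 1)) (hij : i ≠ j) :
      w i ⟂ᵢ[ℙ] w j := indepFun_of_iIndepFun_fin_succ hindep hi hj hij
  have hvariance {Φ : ℕ → ℝ} (hΦ : ∀ i, 1 ≤ i → i ≤ n + 1 → Φ i = 1 ∨ Φ i = -1)
      (hΦlast : Φ (n + 1) = 1) :
      Var[fun ω ↦ ∑ i ∈ Icc 1 (n + 1), Φ i * w i ω; ℙ] = 8 * n * (σ : ℝ) ^ 2 := by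
    rw [variance_sum_mul_of_pairwise_indepFun hL2 hpair, sum_congr rfl fun i hi ↦ by rw [hvar i hi],
      sum_mul_mul_apufWeightVar hn hΦ hΦlast hΦ hΦlast, simFactor_self hn]
    ring
  refine ⟨hvariance hΦ₁ hΦ₁last, hvariance hΦ₂ hΦ₂last, ?_⟩
  rw [integral_sum_mul_sum_of_pairwise_indepFun hL2 hmean hpair,
    sum_congr rfl fun i hi ↦ by rw [hvar i hi],
    sum_mul_mul_apufWeightVar hn hΦ₁ hΦ₁last hΦ₂ hΦ₂last]
  have hn0 : (n : ℝ) ≠ 0 := by positivity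
  have hσ0 : (σ : ℝ) ≠ 0 := by positivity
  field_simp

/-- In the APUF model (`w_1, …, w_{n+1}` independent centered Gaussians,
`Var(w_1) = Var(w_{n+1}) = 4σ²`, `Var(w_i) = 8σ²` for `2 ≤ i ≤ n`), for challenges
`Φ₁, Φ₂ ∈ {±1}^{n+1}` with last coordinate `1`, the variables `Φ₁·w` and `Φ₂·w` each have
variance `8nσ²` and correlation coefficient `E[(Φ₁·w)(Φ₂·w)]/(8nσ²) = 2S(Φ₁,Φ₂)/n − 1`. -/
theorem stmt6
    {Ω : Type*} [MeasureSpace Ω] [IsProbabilityMeasure (ℙ : Measure Ω)]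
    (n : ℕ) (hn : 1 ≤ n) (σ : ℝ≥0) (hσ : 0 < σ)
    (w : ℕ → Ω → ℝ) (hwm : ∀ i, Measurable (w i))
    (hindep : iIndepFun (fun i : Fin (n+1) => w ((i : ℕ) + 1)) ℙ)
    (hw1 : Measure.map (w 1) ℙ = gaussianReal 0 (4 * σ ^ 2))
    (hwlast : Measure.map (w (n+1)) ℙ = gaussianReal 0 (4 * σ ^ 2))
    (hwmid : ∀ i, 2 ≤ i → i ≤ n → Measure.map (w i) ℙ = gaussianReal 0 (8 * σ ^ 2))
    (Φ₁ Φ₂ : ℕ → ℝ)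
    (hΦ₁ : ∀ i, 1 ≤ i → i ≤ n + 1 → Φ₁ i = 1 ∨ Φ₁ i = -1) (hΦ₁last : Φ₁ (n+1) = 1)
    (hΦ₂ : ∀ i, 1 ≤ i → i ≤ n + 1 → Φ₂ i = 1 ∨ Φ₂ i = -1) (hΦ₂last : Φ₂ (n+1) = 1) :
    variance (fun ω => ∑ i ∈ Finset.Icc 1 (n+1), Φ₁ i * w i ω) ℙ = 8 * n * (σ : ℝ) ^ 2 ∧
    variance (fun ω => ∑ i ∈ Finset.Icc 1 (n+1), Φ₂ i * w i ω) ℙ = 8 * n * (σ : ℝ) ^ 2 ∧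
    (∫ ω, (∑ i ∈ Finset.Icc 1 (n+1), Φ₁ i * w i ω)
          * (∑ i ∈ Finset.Icc 1 (n+1), Φ₂ i * w i ω) ∂ℙ) / (8 * n * (σ : ℝ) ^ 2)
      = 2 * simFactor n Φ₁ Φ₂ / n - 1 :=
  stmt6_general n hn σ hσ w hindep hw1 hwlast hwmid Φ₁ Φ₂ hΦ₁ hΦ₁last hΦ₂ hΦ₂last
end

section
/- Let ρ_{12}, ρ_{13}, ρ_{23} ∈ [−1,1] with r_1 r_2 ρ_{12} > −1 for given r_1, r_2 ∈ {±1}, and suppose |ρ_{13}| ≠ |ρ_{23}|. Let P = (1/2)·[1 + (r_1·arcsin ρ_{13} + r_2·arcsin ρ_{23})/(π/2 + r_1 r_2·arcsin ρ_{12})]. Then: (i) P > 1/2 if and only if r_1·ρ_{13} + r_2·ρ_{23} > 0, and P < 1/2 if and only if r_1·ρ_{13} + r_2·ρ_{23} < 0; (ii) letting i ∈ {1,2} be the index maximizing |ρ_{i3}|, the sign of r_1·arcsin ρ_{13} + r_2·arcsin ρ_{23} equals r_i·sign(ρ_{i3}); consequently the maximizer of the conditional probability (the optimal one-guess prediction of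 the third response) is r̂ = r_i·sign(ρ_{i3}). -/
/-!
Write `a = r₁ρ₁₃`, `b = r₂ρ₂₃`. Since `arcsin` is odd, the numerator of `P - 1/2` is
`arcsin a + arcsin b` and its denominator is `π/2 + arcsin (r₁r₂ρ₁₂) > 0`, so `P - 1/2` has the
sign of `arcsin a + arcsin b = arcsin a - arcsin (-b)`, which by strict monotonicity is the sign of
`a + b`. Since `|arcsin x| = arcsin |x|` is strictly increasing in `|x|`, the summand with the
larger `|ρ_{i3}|` dominates, so this sign is also `sign (arcsin (rᵢρ_{i3})) = rᵢ · sign ρ_{i3}`.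
-/

namespace Real

theorem sign_eq_one_iff {x : ℝ} : sign x = 1 ↔ 0 < x := by
  unfold sign; split_ifs <;> grind

theorem sign_eq_neg_one_iff {x : ℝ} : sign x = -1 ↔ x < 0 := by
  unfold sign; split_ifs <;> grind

theorem sign_div_of_pos {x c : ℝ} (hc : 0 < c) : sign (x / c) = sign x := by
  rcases lt_trichotomy x 0 with hx | rfl | hx
  · rw [sign_of_neg hx, sign_of_neg (div_neg_of_neg_of_pos hx hc)]
  · rw [zero_div]
  · rw [sign_of_pos hx, sign_of_pos (div_pos hx hc)]

theorem sign_mul_of_abs_eq_one {s : ℝ} (hs : |s| = 1) (x : ℝ) : sign (s * x) = s * sign x := by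
  rcases (abs_eq zero_le_one).1 hs with rfl | rfl <;> simp [sign_neg]

theorem sign_add_of_abs_lt {x y : ℝ} (h : |y| < |x|) : sign (x + y) = sign x := by
  rcases lt_trichotomy x 0 with hx | rfl | hx
  · rw [sign_of_neg hx, sign_of_neg (by linarith [le_abs_self y, abs_of_neg hx])]
  · exact absurd h (by simp)
  · rw [sign_of_pos hx, sign_of_pos (by linarith [neg_abs_le y, abs_of_pos hx])]

theorem sign_arcsin (x : ℝ) : sign (arcsin x) = sign x := by
  rcases lt_trichotomy x 0 with hx | rfl | hx
  · rw [sign_of_neg hx, sign_of_neg (arcsin_lt_zero.2 hx)]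
  · rw [arcsin_zero]
  · rw [sign_of_pos hx, sign_of_pos (arcsin_pos.2 hx)]

theorem mul_arcsin_of_abs_eq_one {s : ℝ} (hs : |s| = 1) (x : ℝ) :
    s * arcsin x = arcsin (s * x) := by
  rcases (abs_eq zero_le_one).1 hs with rfl | rfl <;> simp [arcsin_neg]

theorem abs_arcsin (x : ℝ) : |arcsin x| = arcsin |x| := by
  rcases le_or_gt 0 x with hx | hx
  · rw [abs_of_nonneg hx, abs_of_nonneg (arcsin_nonneg.2 hx)]
  · rw [abs_of_neg hx, abs_of_neg (arcsin_lt_zero.2 hx), arcsin_neg]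

theorem abs_arcsin_lt_abs_arcsin {x y : ℝ} (hx : |x| ≤ 1) (h : |y| < |x|) :
    |arcsin y| < |arcsin x| := by
  rw [abs_arcsin, abs_arcsin]
  exact arcsin_lt_arcsin (by linarith [abs_nonneg y]) h hx

theorem sign_arcsin_add_arcsin {a b : ℝ} (ha : |a| ≤ 1) (hb : |b| ≤ 1) :
    sign (arcsin a + arcsin b) = sign (a + b) := by
  obtain ⟨ha₁, ha₂⟩ := abs_le.1 ha
  obtain ⟨hb₁, hb₂⟩ := abs_le.1 hb
  rcases lt_trichotomy (a + b) 0 with h | h | h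
  · have := arcsin_lt_arcsin ha₁ (show a < -b by linarith) (by linarith)
    rw [arcsin_neg] at this
    rw [sign_of_neg h, sign_of_neg (by linarith)]
  · rw [h, eq_neg_of_add_eq_zero_left h, arcsin_neg, neg_add_cancel]
  · have := arcsin_lt_arcsin (show -1 ≤ -b by linarith) (show -b < a by linarith) ha₂
    rw [arcsin_neg] at this
    rw [sign_of_pos h, sign_of_pos (by linarith)]

theorem sign_arcsin_add_arcsin_of_abs_lt {a b : ℝ} (ha : |a| ≤ 1) (h : |b| < |a|) :
    sign (arcsin a + arcsin b) = sign a := by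
  rw [sign_add_of_abs_lt (abs_arcsin_lt_abs_arcsin ha h), sign_arcsin]

end Real

theorem stmt14_general (ρ₁₂ ρ₁₃ ρ₂₃ : ℝ)
    (h₁₃ : ρ₁₃ ∈ Set.Icc (-1 : ℝ) 1)
    (h₂₃ : ρ₂₃ ∈ Set.Icc (-1 : ℝ) 1)
    (r₁ r₂ : ℝ) (hr₁ : r₁ = 1 ∨ r₁ = -1) (hr₂ : r₂ = 1 ∨ r₂ = -1)
    (hpos : -1 < r₁ * r₂ * ρ₁₂) (hne : |ρ₁₃| ≠ |ρ₂₃|)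
    (P : ℝ)
    (hP : P = (1 / 2) * (1 + (r₁ * Real.arcsin ρ₁₃ + r₂ * Real.arcsin ρ₂₃)
        / (Real.pi / 2 + r₁ * r₂ * Real.arcsin ρ₁₂)))
    (r ρ : ℝ)
    (hmax₁ : |ρ₂₃| < |ρ₁₃| → r = r₁ ∧ ρ = ρ₁₃)
    (hmax₂ : |ρ₁₃| < |ρ₂₃| → r = r₂ ∧ ρ = ρ₂₃) :
    ((1 / 2 < P ↔ 0 < r₁ * ρ₁₃ + r₂ * ρ₂₃) ∧
      (P < 1 / 2 ↔ r₁ * ρ₁₃ + r₂ * ρ₂₃ < 0)) ∧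
    Real.sign (r₁ * Real.arcsin ρ₁₃ + r₂ * Real.arcsin ρ₂₃) = r * Real.sign ρ ∧
    (1 / 2 < P ↔ r * Real.sign ρ = 1) ∧
    (P < 1 / 2 ↔ r * Real.sign ρ = -1) := by
  have hs₁ : |r₁| = 1 := (abs_eq zero_le_one).2 hr₁
  have hs₂ : |r₂| = 1 := (abs_eq zero_le_one).2 hr₂
  have hs₁₂ : |r₁ * r₂| = 1 := by rw [abs_mul, hs₁, hs₂, one_mul]
  have ha : |r₁ * ρ₁₃| = |ρ₁₃| := by rw [abs_mul, hs₁, one_mul]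
  have hb : |r₂ * ρ₂₃| = |ρ₂₃| := by rw [abs_mul, hs₂, one_mul]
  have ha₁ : |r₁ * ρ₁₃| ≤ 1 := ha ▸ abs_le.2 h₁₃
  have hb₁ : |r₂ * ρ₂₃| ≤ 1 := hb ▸ abs_le.2 h₂₃
  have hD : 0 < Real.pi / 2 + r₁ * r₂ * Real.arcsin ρ₁₂ := by
    rw [Real.mul_arcsin_of_abs_eq_one hs₁₂]
    linarith [Real.neg_pi_div_two_lt_arcsin.2 hpos]
  rw [Real.mul_arcsin_of_abs_eq_one hs₁, Real.mul_arcsin_of_abs_eq_one hs₂] at hP ⊢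
  set N := Real.arcsin (r₁ * ρ₁₃) + Real.arcsin (r₂ * ρ₂₃) with hN
  set D := Real.pi / 2 + r₁ * r₂ * Real.arcsin ρ₁₂
  have hP_sign : Real.sign (P - 1 / 2) = Real.sign N := by
    rw [hP, ← Real.sign_div_of_pos (x := N) (mul_pos two_pos hD)]
    congr 1
    field_simp
    ring
  have hN_sign : Real.sign N = Real.sign (r₁ * ρ₁₃ + r₂ * ρ₂₃) :=
    Real.sign_arcsin_add_arcsin ha₁ hb₁
  have hN_dom : Real.sign N = r * Real.sign ρ := by
    rcases hne.lt_or_gt with h | h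
    · obtain ⟨rfl, rfl⟩ := hmax₂ h
      rw [hN, add_comm, Real.sign_arcsin_add_arcsin_of_abs_lt hb₁ (by rwa [ha, hb]),
        Real.sign_mul_of_abs_eq_one hs₂]
    · obtain ⟨rfl, rfl⟩ := hmax₁ h
      rw [hN, Real.sign_arcsin_add_arcsin_of_abs_lt ha₁ (by rwa [ha, hb]),
        Real.sign_mul_of_abs_eq_one hs₁]
  have hgt : 1 / 2 < P ↔ Real.sign N = 1 := by rw [← hP_sign, Real.sign_eq_one_iff, sub_pos]
  have hlt : P < 1 / 2 ↔ Real.sign N = -1 := by rw [← hP_sign, Real.sign_eq_neg_one_iff, sub_neg]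
  refine ⟨⟨?_, ?_⟩, hN_dom, hN_dom ▸ hgt, hN_dom ▸ hlt⟩
  · rw [hgt, hN_sign, Real.sign_eq_one_iff]
  · rw [hlt, hN_sign, Real.sign_eq_neg_one_iff]

/-- Let `ρ₁₂, ρ₁₃, ρ₂₃ ∈ [−1,1]`, `r₁, r₂ ∈ {±1}` with
`r₁r₂ρ₁₂ > −1` and `|ρ₁₃| ≠ |ρ₂₃|`, and let
`P = (1/2)·[1 + (r₁·arcsin ρ₁₃ + r₂·arcsin ρ₂₃)/(π/2 + r₁r₂·arcsin ρ₁₂)]`.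
Then (i) `P > 1/2 ↔ r₁ρ₁₃ + r₂ρ₂₃ > 0` and `P < 1/2 ↔ r₁ρ₁₃ + r₂ρ₂₃ < 0`;
(ii) with `(r, ρ)` the pair `(rᵢ, ρ_{i3})` for the index `i` maximizing `|ρ_{i3}|`,
`sign(r₁·arcsin ρ₁₃ + r₂·arcsin ρ₂₃) = r·sign ρ`; consequently the optimal one-guess
prediction of the third response is `r̂ = r·sign ρ`, i.e. `P > 1/2 ↔ r·sign ρ = 1`
and `P < 1/2 ↔ r·sign ρ = −1`. -/
theorem stmt14 (ρ₁₂ ρ₁₃ ρ₂₃ : ℝ)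
    (h₁₂ : ρ₁₂ ∈ Set.Icc (-1 : ℝ) 1) (h₁₃ : ρ₁₃ ∈ Set.Icc (-1 : ℝ) 1)
    (h₂₃ : ρ₂₃ ∈ Set.Icc (-1 : ℝ) 1)
    (r₁ r₂ : ℝ) (hr₁ : r₁ = 1 ∨ r₁ = -1) (hr₂ : r₂ = 1 ∨ r₂ = -1)
    (hpos : -1 < r₁ * r₂ * ρ₁₂) (hne : |ρ₁₃| ≠ |ρ₂₃|)
    (P : ℝ)
    (hP : P = (1 / 2) * (1 + (r₁ * Real.arcsin ρ₁₃ + r₂ * Real.arcsin ρ₂₃)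
        / (Real.pi / 2 + r₁ * r₂ * Real.arcsin ρ₁₂)))
    (r ρ : ℝ)
    (hmax₁ : |ρ₂₃| < |ρ₁₃| → r = r₁ ∧ ρ = ρ₁₃)
    (hmax₂ : |ρ₁₃| < |ρ₂₃| → r = r₂ ∧ ρ = ρ₂₃) :
    ((1 / 2 < P ↔ 0 < r₁ * ρ₁₃ + r₂ * ρ₂₃) ∧
      (P < 1 / 2 ↔ r₁ * ρ₁₃ + r₂ * ρ₂₃ < 0)) ∧
    Real.sign (r₁ * Real.arcsin ρ₁₃ + r₂ * Real.arcsin ρ₂₃) = r * Real.sign ρ ∧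
    (1 / 2 < P ↔ r * Real.sign ρ = 1) ∧
    (P < 1 / 2 ↔ r * Real.sign ρ = -1) :=
  stmt14_general ρ₁₂ ρ₁₃ ρ₂₃ h₁₃ h₂₃ r₁ r₂ hr₁ hr₂ hpos hne P hP r ρ hmax₁ hmax₂
end
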